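/- The Huber effective loss L_λ(r) (equal to r²/2 for |r| ≤ λ and λ|r| - λ²/2 otherwise) is Fisher consistent for the mean under symmetric distributions: if U is an integrable random variable with a distribution symmetric about θ and E[L_λ(U - t)] is finite for all t, then t = θ minimizes t ↦ E[L_λ(U - t)]. -/

import Mathlib

/-!
The Huber loss is the supremum of the parabolas `r ↦ c * r - c ^ 2 / 2` over slopes `|c| ≤ λ`,
hence convex, and it is even. If `U` is symmetric about `θ`, the expected loss at `t` equals the
expected loss at the reflected point `2θ - t`; since `θ` is the midpoint of `t` and `2θ - t`,
convexity bounds the expected loss at `θ` by the average of the two, which is the loss at `t`.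
-/

open MeasureTheory

/-- The Huber loss with bending constant `λ`. -/
noncomputable def huberLoss (lam r : ℝ) : ℝ :=
  if |r| ≤ lam then r^2 / 2 else lam * |r| - lam^2 / 2

open ProbabilityTheory Set

lemma huberLoss_neg (lam r : ℝ) : huberLoss lam (-r) = huberLoss lam r := by
  simp only [huberLoss, abs_neg, neg_sq]

lemma mul_sub_sq_div_two_le_huberLoss {lam c : ℝ} (hc : |c| ≤ lam) (r : ℝ) :
    c * r - c ^ 2 / 2 ≤ huberLoss lam r := by
  unfold huberLoss
  split_ifs with hr
  · nlinarith [sq_nonneg (r - c)]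
  · have hcr : c * r ≤ |c| * |r| := by rw [← abs_mul]; exact le_abs_self _
    nlinarith [sq_abs c, abs_nonneg c]

lemma exists_mul_sub_sq_div_two_eq_huberLoss {lam : ℝ} (hlam : 0 ≤ lam) (r : ℝ) :
    ∃ c, |c| ≤ lam ∧ c * r - c ^ 2 / 2 = huberLoss lam r := by
  unfold huberLoss
  split_ifs with hr
  · exact ⟨r, hr, by ring⟩
  · rcases le_or_gt 0 r with h0 | h0
    · refine ⟨lam, (abs_of_nonneg hlam).le, ?_⟩
      rw [abs_of_nonneg h0]
    · refine ⟨-lam, by rw [abs_neg, abs_of_nonneg hlam], ?_⟩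
      rw [abs_of_neg h0]; ring

lemma convexOn_huberLoss {lam : ℝ} (hlam : 0 ≤ lam) : ConvexOn ℝ univ (huberLoss lam) := by
  refine ⟨convex_univ, fun x _ y _ a b ha hb hab => ?_⟩
  obtain ⟨c, hc, hceq⟩ := exists_mul_sub_sq_div_two_eq_huberLoss hlam (a • x + b • y)
  calc huberLoss lam (a • x + b • y)
      = a * (c * x - c ^ 2 / 2) + b * (c * y - c ^ 2 / 2) := by
        rw [← hceq, smul_eq_mul, smul_eq_mul]; linear_combination (c ^ 2 / 2) * hab
    _ ≤ a • huberLoss lam x + b • huberLoss lam y := by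
        simp only [smul_eq_mul]
        gcongr <;> exact mul_sub_sq_div_two_le_huberLoss hc _

lemma integral_comp_sub_reflect_eq {Ω : Type*} [MeasurableSpace Ω] {μ : Measure Ω}
    {X : Ω → ℝ} (hX : AEMeasurable X μ) {θ : ℝ}
    (hsymm : μ.map (fun ω => X ω - θ) = μ.map (fun ω => θ - X ω))
    {f : ℝ → ℝ} (hf : Measurable f) (heven : ∀ x, f (-x) = f x) (t : ℝ) :
    ∫ ω, f (X ω - (2 * θ - t)) ∂μ = ∫ ω, f (X ω - t) ∂μ := by
  have hid : IdentDistrib (fun ω => X ω - θ) (fun ω => θ - X ω) μ μ :=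
    ⟨hX.sub_const θ, aemeasurable_const.sub hX, hsymm⟩
  have := (hid.comp (hf.comp (measurable_id.sub_const (t - θ)))).integral_eq
  simp only [Function.comp_def, id] at this
  convert this.symm using 3 with ω ω
  · rw [← heven]; congr 1; ring
  · congr 1; ring

theorem integral_comp_sub_center_le_of_convexOn_of_even {Ω : Type*} [MeasurableSpace Ω]
    {μ : Measure Ω} {X : Ω → ℝ} (hX : AEMeasurable X μ) {θ : ℝ}
    (hsymm : μ.map (fun ω => X ω - θ) = μ.map (fun ω => θ - X ω))
    {f : ℝ → ℝ} (hf : ConvexOn ℝ univ f) (heven : ∀ x, f (-x) = f x)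
    (hint : ∀ t, Integrable (fun ω => f (X ω - t)) μ) (t : ℝ) :
    ∫ ω, f (X ω - θ) ∂μ ≤ ∫ ω, f (X ω - t) ∂μ := by
  have hfm : Measurable f :=
    (continuousOn_univ.mp (hf.continuousOn isOpen_univ)).measurable
  have hmid : ∀ ω, f (X ω - θ) ≤ (f (X ω - t) + f (X ω - (2 * θ - t))) / 2 := fun ω => by
    have half := hf.2 (mem_univ (X ω - t)) (mem_univ (X ω - (2 * θ - t)))
      (by norm_num : (0 : ℝ) ≤ 1 / 2) (by norm_num : (0 : ℝ) ≤ 1 / 2) (by norm_num)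
    simp only [smul_eq_mul] at half
    calc f (X ω - θ) = f (1 / 2 * (X ω - t) + 1 / 2 * (X ω - (2 * θ - t))) := by ring_nf
      _ ≤ _ := half
      _ = _ := by ring
  calc ∫ ω, f (X ω - θ) ∂μ
      ≤ ∫ ω, (f (X ω - t) + f (X ω - (2 * θ - t))) / 2 ∂μ :=
        integral_mono (hint θ) (((hint t).add (hint _)).div_const 2) hmid
    _ = ∫ ω, f (X ω - t) ∂μ := by
        rw [integral_div, integral_add (hint t) (hint _),
          integral_comp_sub_reflect_eq hX hsymm hfm heven]
        ring

theorem huber_fisher_consistent_symmetric_general {Ω : Type*} [MeasureSpace Ω]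
    (lam : ℝ) (hlam : 0 < lam) (U : Ω → ℝ) (hmeas : Measurable U)
    (θ : ℝ)
    (hsymm : Measure.map (fun ω => U ω - θ) MeasureTheory.volume =
      Measure.map (fun ω => θ - U ω) MeasureTheory.volume)
    (hloss : ∀ t : ℝ, Integrable (fun ω => huberLoss lam (U ω - t))) :
    ∀ t : ℝ, ∫ ω, huberLoss lam (U ω - θ) ≤ ∫ ω, huberLoss lam (U ω - t) :=
  integral_comp_sub_center_le_of_convexOn_of_even hmeas.aemeasurable hsymm
    (convexOn_huberLoss hlam.le) (huberLoss_neg lam) hloss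

/-- Fisher consistency of the Huber loss for the center of a symmetric distribution:
if `U` is symmetric about `θ`, then `t = θ` minimizes `t ↦ E[huberLoss λ (U - t)]`. -/
theorem huber_fisher_consistent_symmetric {Ω : Type*} [MeasureSpace Ω]
    [IsProbabilityMeasure (MeasureTheory.volume : Measure Ω)]
    (lam : ℝ) (hlam : 0 < lam) (U : Ω → ℝ) (hmeas : Measurable U)
    (hint : Integrable U) (θ : ℝ)
    (hsymm : Measure.map (fun ω => U ω - θ) MeasureTheory.volume =
      Measure.map (fun ω => θ - U ω) MeasureTheory.volume)
    (hloss : ∀ t : ℝ, Integrable (fun ω => huberLoss lam (U ω - t))) :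
    ∀ t : ℝ, ∫ ω, huberLoss lam (U ω - θ) ≤ ∫ ω, huberLoss lam (U ω - t) :=
  huber_fisher_consistent_symmetric_general lam hlam U hmeas θ hsymm hloss
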